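/- arXiv:1202.6044 — 2 statements merged into one kernel-verified Lean document; each statement's English description precedes it below -/
import Mathlib

section
/- Let G be a just-infinite group with a central subgroup of finite index. Then G is abelian, and if moreover G is finitely generated then G is isomorphic to the infinite cyclic group ℤ. -/
/-!
If the center has finite index, a commutator `⁅a, b⁆` depends only on the cosets of `a` and `b`
modulo the center, so there are finitely many commutators and, by Schur's theorem, the
commutator subgroup is finite. In a just-infinite group a finite normal
subgroup is trivial (it cannot have finite index), so `G` is abelian. An abelian just-infinite
group is torsion-free, and for `a ≠ 1` the power map `g ↦ g ^ [G : ⟨a⟩]` embeds it into `⟨a⟩`,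
so it is infinite cyclic.
-/

open Subgroup
open scoped commutatorElement

section Commutator

variable {G : Type*} [Group G]

theorem commutatorElement_mul_mem_center_left {a z : G} (b : G) (hz : z ∈ center G) :
    ⁅a * z, b⁆ = ⁅a, b⁆ := by
  simp only [commutatorElement_def, mul_inv_rev]
  rw [mul_assoc a z b, ← mem_center_iff.mp hz b]
  group

theorem commutatorElement_mul_mem_center_right (a : G) {b w : G} (hw : w ∈ center G) :
    ⁅a, b * w⁆ = ⁅a, b⁆ := by
  rw [← commutatorElement_inv, commutatorElement_mul_mem_center_left a hw, commutatorElement_inv]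

theorem finite_commutatorSet_of_finiteIndex_center [(center G).FiniteIndex] :
    Finite (commutatorSet G) := by
  refine Set.Finite.to_subtype <|
    (Set.finite_range fun p : (G ⧸ center G) × (G ⧸ center G) => ⁅p.1.out, p.2.out⁆).subset ?_
  rintro _ ⟨a, b, rfl⟩
  obtain ⟨z, hz⟩ := QuotientGroup.mk_out_eq_mul (center G) a
  obtain ⟨w, hw⟩ := QuotientGroup.mk_out_eq_mul (center G) b
  refine ⟨(a, b), ?_⟩
  simp only [hz, hw, commutatorElement_mul_mem_center_left _ z.2,
    commutatorElement_mul_mem_center_right _ w.2]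

end Commutator

structure Group.IsJustInfinite (G : Type*) [Group G] : Prop where
  infinite : Infinite G
  finiteIndex_of_normal : ∀ N : Subgroup G, N.Normal → N ≠ ⊥ → N.FiniteIndex

namespace Group.IsJustInfinite

variable {G : Type*}

theorem eq_bot_of_finite [Group G] (hG : IsJustInfinite G) (N : Subgroup G) [N.Normal]
    [Finite N] : N = ⊥ := by
  by_contra hN
  have := hG.finiteIndex_of_normal N ‹_› hN
  have := hG.infinite
  have := Finite.of_subgroup_quotient N
  exact not_finite G

theorem center_eq_top_of_finiteIndex [Group G] (hG : IsJustInfinite G)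
    [(center G).FiniteIndex] : center G = ⊤ := by
  have := finite_commutatorSet_of_finiteIndex_center (G := G)
  exact (commutator_eq_bot_iff_center_eq_top G).mp (hG.eq_bot_of_finite _)

theorem isMulTorsionFree [CommGroup G] (hG : IsJustInfinite G) : IsMulTorsionFree G :=
  .of_not_isOfFinOrder fun g hg hfin => by
    have := hfin.finite_zpowers.to_subtype
    exact hg (zpowers_eq_bot.mp (hG.eq_bot_of_finite _))

theorem isCyclic [CommGroup G] (hG : IsJustInfinite G) : IsCyclic G := by
  have := hG.infinite
  have := hG.isMulTorsionFree
  obtain ⟨a, ha⟩ := exists_ne (1 : G)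
  have := hG.finiteIndex_of_normal (zpowers a) inferInstance (by simpa using ha)
  let f : G →* zpowers a :=
    (powMonoidHom (zpowers a).index).codRestrict _ (zpowers a).pow_index_mem
  refine isCyclic_of_injective f fun x y hxy => ?_
  exact IsMulTorsionFree.pow_left_injective FiniteIndex.index_ne_zero (congrArg Subtype.val hxy)

end Group.IsJustInfinite

theorem just_infinite_central_finite_index_abelian {G : Type*} [Group G]
    (hinf : Infinite G)
    (hji : ∀ N : Subgroup G, N.Normal → N ≠ ⊥ → N.FiniteIndex)
    (H : Subgroup G) (hcentral : H ≤ Subgroup.center G) (hindex : H.FiniteIndex) :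
    (∀ a b : G, a * b = b * a) ∧
    (Group.FG G → Nonempty (G ≃* Multiplicative ℤ)) := by
  have hG : Group.IsJustInfinite G := ⟨hinf, hji⟩
  have := finiteIndex_of_le hcentral
  have hcomm : ∀ a b : G, a * b = b * a := fun a b =>
    (mem_center_iff.mp (hG.center_eq_top_of_finiteIndex ▸ mem_top b) a)
  refine ⟨hcomm, fun _ => ?_⟩
  let : CommGroup G := { ‹Group G› with mul_comm := hcomm }
  have := hG.isCyclic
  exact ⟨intCyclicMulEquiv.symm⟩
end

section
/- Let G be a finitely generated group of subexponential growth, and let x, y ∈ G. Then the subgroup of G generated by the set of conjugates {x^n y x^{−n} : n ≥ 0} is finitely generated. -/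
/-- Word length of `g` with respect to a generating set `S`:
the least `n` such that `g` is a product of `n` elements of `S ∪ S⁻¹`. -/
noncomputable def wordLength {G : Type*} [Group G] (S : Set G) (g : G) : ℕ :=
  sInf {n | ∃ l : List G, (∀ x ∈ l, x ∈ S ∨ x⁻¹ ∈ S) ∧ l.length = n ∧ l.prod = g}

/-- Growth function: number of elements of word length at most `n`. -/
noncomputable def growth {G : Type*} [Group G] (S : Set G) (n : ℕ) : ℕ :=
  Nat.card {g : G | wordLength S g ≤ n}

section WL
variable {G : Type*} [Group G] {S : Set G}

lemma wordLength_le_of (l : List G) (h : ∀ z ∈ l, z ∈ S ∨ z⁻¹ ∈ S) :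
    wordLength S l.prod ≤ l.length :=
  Nat.sInf_le ⟨l, h, rfl, rfl⟩

lemma exists_word (hA : Subgroup.closure S = ⊤) (g : G) :
    ∃ l : List G, (∀ z ∈ l, z ∈ S ∨ z⁻¹ ∈ S) ∧ l.length = wordLength S g ∧ l.prod = g := by
  have hne : {n | ∃ l : List G, (∀ x ∈ l, x ∈ S ∨ x⁻¹ ∈ S) ∧ l.length = n ∧ l.prod = g}.Nonempty := by
    have hg : g ∈ Submonoid.closure (S ∪ S⁻¹) := by
      rw [← Subgroup.closure_toSubmonoid, hA]; exact Subgroup.mem_top g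
    obtain ⟨l, hl, hp⟩ := Submonoid.exists_list_of_mem_closure hg
    refine ⟨l.length, l, fun z hz => ?_, rfl, hp⟩
    rcases hl z hz with h | h
    · exact Or.inl h
    · exact Or.inr (Set.mem_inv.mp h)
  exact Nat.sInf_mem hne

lemma wordLength_mul_le (hA : Subgroup.closure S = ⊤) (g h : G) :
    wordLength S (g * h) ≤ wordLength S g + wordLength S h := by
  obtain ⟨lg, hg1, hg2, hg3⟩ := exists_word hA g
  obtain ⟨lh, hh1, hh2, hh3⟩ := exists_word hA h
  have := wordLength_le_of (S := S) (lg ++ lh) (by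
    intro z hz; rcases List.mem_append.mp hz with h' | h'
    · exact hg1 z h'
    · exact hh1 z h')
  simpa [hg2, hh2, hg3, hh3] using this

lemma wordLength_inv_le (hA : Subgroup.closure S = ⊤) (g : G) :
    wordLength S g⁻¹ ≤ wordLength S g := by
  obtain ⟨l, h1, h2, h3⟩ := exists_word hA g
  have hp : ((l.map fun z => z⁻¹).reverse).prod = g⁻¹ := by
    rw [← h3, ← List.prod_inv_reverse]
  have := wordLength_le_of (S := S) ((l.map fun z => z⁻¹).reverse) (by
    intro z hz
    simp only [List.mem_reverse, List.mem_map] at hz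
    obtain ⟨w, hw, rfl⟩ := hz
    rcases h1 w hw with h | h
    · exact Or.inr (by simpa using h)
    · exact Or.inl h)
  rw [hp] at this
  simpa [h2] using this

lemma wordLength_pow_le (hA : Subgroup.closure S = ⊤) (g : G) (n : ℕ) :
    wordLength S (g ^ n) ≤ n * wordLength S g := by
  induction n with
  | zero => simp [show wordLength S 1 ≤ 0 by simpa using wordLength_le_of (S := S) [] (by simp)]
  | succ n ih =>
      calc wordLength S (g ^ (n + 1)) = wordLength S (g ^ n * g) := by rw [pow_succ]
        _ ≤ wordLength S (g ^ n) + wordLength S g := wordLength_mul_le hA _ _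
        _ ≤ n * wordLength S g + wordLength S g := by omega
        _ = (n + 1) * wordLength S g := by ring

lemma wordLength_one (hA : Subgroup.closure S = ⊤) : wordLength S (1 : G) = 0 :=
  Nat.le_zero.mp (by simpa using wordLength_le_of (S := S) [] (by simp))

lemma wordLength_listProd_le (hA : Subgroup.closure S = ⊤) (l : List G) (C : ℕ)
    (h : ∀ z ∈ l, wordLength S z ≤ C) : wordLength S l.prod ≤ l.length * C := by
  induction l with
  | nil => simp [wordLength_one hA]
  | cons a t ih =>
      calc wordLength S (a :: t).prod = wordLength S (a * t.prod) := by simp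
        _ ≤ wordLength S a + wordLength S t.prod := wordLength_mul_le hA _ _
        _ ≤ C + t.length * C := add_le_add (h a (by simp)) (ih fun z hz => h z (by simp [hz]))
        _ = (a :: t).length * C := by simp [Nat.succ_mul, Nat.add_comm]

lemma ball_finite (hA : Subgroup.closure S = ⊤) (hS : S.Finite) (n : ℕ) : {g : G | wordLength S g ≤ n}.Finite := by
  have hT : (S ∪ S⁻¹).Finite := hS.union hS.inv
  have hfin : ∀ m : ℕ, {l : List G | (∀ z ∈ l, z ∈ S ∪ S⁻¹) ∧ l.length ≤ m}.Finite := by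
    intro m
    induction m with
    | zero =>
        refine Set.Finite.subset (Set.finite_singleton ([] : List G)) ?_
        rintro l ⟨-, hl⟩
        simpa using List.length_eq_zero_iff.mp (Nat.le_zero.mp hl)
    | succ m ih =>
        refine Set.Finite.subset ((hT.image2 List.cons ih).insert ([] : List G)) ?_
        rintro l ⟨h1, h2⟩
        cases l with
        | nil => exact Set.mem_insert _ _
        | cons a t =>
            refine Set.mem_insert_of_mem _ (Set.mem_image2_of_mem (h1 a (by simp)) ?_)
            exact ⟨fun z hz => h1 z (by simp [hz]), by simpa using h2⟩
  refine Set.Finite.subset ((hfin n).image List.prod) ?_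
  intro g hg
  obtain ⟨l, h1, h2, h3⟩ := exists_word hA g
  refine ⟨l, ⟨fun z hz => ?_, by rw [h2]; exact hg⟩, h3⟩
  rcases h1 z hz with h | h
  · exact Or.inl h
  · exact Or.inr (Set.mem_inv.mpr h)

end WL

section Milnor
variable {G : Type*} [Group G]

/-- The conjugates `x^n y x^{-n}`. -/
def conjSeq (x y : G) (n : ℕ) : G := x ^ n * y * (x ^ n)⁻¹

/-- Partial products of conjugates selected by `ε`. -/
def Pword (x y : G) (ε : ℕ → Bool) (n : ℕ) : G :=
  ((List.range n).map fun i => if ε i then conjSeq x y i else 1).prod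

lemma Pword_succ (x y : G) (ε : ℕ → Bool) (n : ℕ) :
    Pword x y ε (n + 1) = Pword x y ε n * (if ε n then conjSeq x y n else 1) := by
  simp [Pword, List.range_succ]

lemma Pword_eq (x y : G) (ε : ℕ → Bool) (n : ℕ) :
    Pword x y ε n = ((List.range n).map fun i => (if ε i then y else 1) * x).prod * (x ^ n)⁻¹ := by
  induction n with
  | zero => simp [Pword]
  | succ n ih =>
      rw [Pword_succ, ih, List.range_succ, List.map_append, List.prod_append]
      by_cases h : ε n <;> simp [h, conjSeq, pow_succ] <;> group

lemma Pword_mem (x y : G) (ε : ℕ → Bool) (n : ℕ) :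
    Pword x y ε n ∈ Subgroup.closure {g : G | ∃ i < n, g = conjSeq x y i} := by
  apply list_prod_mem
  intro z hz
  simp only [List.mem_map, List.mem_range] at hz
  obtain ⟨i, hi, rfl⟩ := hz
  by_cases h : ε i
  · simp only [h, if_true]
    exact Subgroup.subset_closure ⟨i, hi, rfl⟩
  · simp only [h, if_false]
    exact one_mem _

lemma Pword_wl {S : Set G} (hA : Subgroup.closure S = ⊤) (x y : G) (ε : ℕ → Bool) (n : ℕ) :
    wordLength S (Pword x y ε n) ≤ n * (wordLength S y + 2 * wordLength S x) := by
  rw [Pword_eq]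
  have h1 : wordLength S (((List.range n).map fun i => (if ε i then y else 1) * x).prod)
      ≤ n * (wordLength S y + wordLength S x) := by
    have := wordLength_listProd_le hA ((List.range n).map fun i => (if ε i then y else 1) * x)
      (wordLength S y + wordLength S x) ?_
    · simpa using this
    · intro z hz
      simp only [List.mem_map, List.mem_range] at hz
      obtain ⟨i, _, rfl⟩ := hz
      refine le_trans (wordLength_mul_le hA _ _) (add_le_add ?_ le_rfl)
      by_cases h : ε i
      · simp [h]
      · simp [h, wordLength_one hA]
  have h2 : wordLength S ((x ^ n)⁻¹) ≤ n * wordLength S x :=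
    le_trans (wordLength_inv_le hA _) (wordLength_pow_le hA _ _)
  calc wordLength S _ ≤ _ + _ := wordLength_mul_le hA _ _
    _ ≤ n * (wordLength S y + wordLength S x) + n * wordLength S x := add_le_add h1 h2
    _ = n * (wordLength S y + 2 * wordLength S x) := by ring

lemma Pword_inj (x y : G)
    (hcon : ∀ k, conjSeq x y k ∉ Subgroup.closure {g : G | ∃ i < k, g = conjSeq x y i}) :
    ∀ n (ε ε' : ℕ → Bool), Pword x y ε n = Pword x y ε' n → ∀ i < n, ε i = ε' i := by
  intro n
  induction n with
  | zero => intro ε ε' _ i hi; omega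
  | succ n ih =>
      intro ε ε' h i hi
      rw [Pword_succ, Pword_succ] at h
      by_cases h1 : ε n <;> by_cases h2 : ε' n <;>
        simp [h1, h2] at h
      · rcases Nat.lt_succ_iff_lt_or_eq.mp hi with h' | h'
        · exact ih ε ε' h i h'
        · subst h'; rw [h1, h2]
      · exfalso
        apply hcon n
        have : conjSeq x y n = (Pword x y ε n)⁻¹ * Pword x y ε' n := by
          rw [← h]; group
        rw [this]
        exact mul_mem (inv_mem (Pword_mem x y ε n)) (Pword_mem x y ε' n)
      · exfalso
        apply hcon n
        have : conjSeq x y n = (Pword x y ε' n)⁻¹ * Pword x y ε n := by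
          rw [h]; group
        rw [this]
        exact mul_mem (inv_mem (Pword_mem x y ε' n)) (Pword_mem x y ε n)
      · rcases Nat.lt_succ_iff_lt_or_eq.mp hi with h' | h'
        · exact ih ε ε' h i h'
        · subst h'
          simp [h1, h2]

end Milnor


/-- Milnor's lemma: in a group of subexponential growth, the subgroup generated by the
conjugates `x^n y x^{-n}` is finitely generated. -/
theorem milnor_lemma {G : Type*} [Group G]
    (A : Finset G) (hA : Subgroup.closure (A : Set G) = ⊤)
    (hsub : Filter.Tendsto (fun n : ℕ => (growth (A : Set G) n : ℝ) ^ (1 / (n : ℝ)))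
      Filter.atTop (nhds 1))
    (x y : G) :
    (Subgroup.closure {g : G | ∃ n : ℕ, g = x ^ n * y * (x ^ n)⁻¹}).FG := by
  set S : Set G := (A : Set G) with hS
  set C : ℕ := wordLength S y + 2 * wordLength S x + 1 with hC
  have hC1 : 1 ≤ C := by omega
  -- Key step: some conjugate lies in the subgroup generated by the earlier ones.
  have hkey : ∃ k, conjSeq x y k ∈ Subgroup.closure {g : G | ∃ i < k, g = conjSeq x y i} := by
    by_contra hcon
    push_neg at hcon
    have hcard : ∀ n : ℕ, 2 ^ n ≤ growth S (C * n) := by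
      intro n
      have hfin : {g : G | wordLength S g ≤ C * n}.Finite :=
        ball_finite hA A.finite_toSet _
      haveI := hfin.to_subtype
      set Φ : (Fin n → Bool) → {g : G | wordLength S g ≤ C * n} := fun ε =>
        ⟨Pword x y (fun i => if h : i < n then ε ⟨i, h⟩ else false) n, by
          refine le_trans (Pword_wl hA x y _ n) ?_
          calc n * (wordLength S y + 2 * wordLength S x) ≤ n * C := by
                apply Nat.mul_le_mul_left; omega
            _ = C * n := Nat.mul_comm _ _⟩ with hΦ
      have hinj : Function.Injective Φ := by
        intro ε ε' h
        have h' : Pword x y (fun i => if h : i < n then ε ⟨i, h⟩ else false) n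
            = Pword x y (fun i => if h : i < n then ε' ⟨i, h⟩ else false) n := by
          simpa [hΦ, Subtype.ext_iff] using h
        funext i
        have := Pword_inj x y hcon n _ _ h' i.val i.isLt
        simpa [i.isLt] using this
      calc (2 : ℕ) ^ n = Nat.card (Fin n → Bool) := by simp [Nat.card_eq_fintype_card]
        _ ≤ Nat.card {g : G | wordLength S g ≤ C * n} := Nat.card_le_card_of_injective Φ hinj
        _ = growth S (C * n) := rfl
    -- analytic contradiction
    have htend : Filter.Tendsto (fun n : ℕ => (growth S (C * n) : ℝ) ^ (1 / ((C * n : ℕ) : ℝ)))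
        Filter.atTop (nhds 1) := by
      refine hsub.comp ?_
      exact Filter.tendsto_atTop_mono (fun n => Nat.le_mul_of_pos_left n (by omega))
        Filter.tendsto_id
    have hlow : ∀ᶠ n : ℕ in Filter.atTop,
        (2 : ℝ) ^ ((1 : ℝ) / (C : ℝ)) ≤ (growth S (C * n) : ℝ) ^ (1 / ((C * n : ℕ) : ℝ)) := by
      filter_upwards [Filter.eventually_ge_atTop 1] with n hn
      have hgn : ((2 : ℝ) ^ (n : ℕ)) ≤ (growth S (C * n) : ℝ) := by
        exact_mod_cast hcard n
      have hCn : (0 : ℝ) < ((C * n : ℕ) : ℝ) := by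
        have : 1 ≤ C * n := Nat.one_le_iff_ne_zero.mpr (by positivity)
        exact_mod_cast Nat.lt_of_lt_of_le Nat.zero_lt_one this
      have := Real.rpow_le_rpow (by positivity) hgn (by positivity : (0:ℝ) ≤ 1 / ((C * n : ℕ) : ℝ))
      refine le_trans (le_of_eq ?_) this
      rw [← Real.rpow_natCast 2 n, ← Real.rpow_mul (by norm_num)]
      congr 1
      have hn' : (n : ℝ) ≠ 0 := by exact_mod_cast Nat.one_le_iff_ne_zero.mp hn
      have hC' : (C : ℝ) ≠ 0 := by exact_mod_cast Nat.one_le_iff_ne_zero.mp hC1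
      push_cast
      field_simp
    have hle : (2 : ℝ) ^ ((1 : ℝ) / (C : ℝ)) ≤ 1 := ge_of_tendsto htend hlow
    have hgt : (1 : ℝ) < (2 : ℝ) ^ ((1 : ℝ) / (C : ℝ)) := by
      have hCpos : (0:ℝ) < (C : ℝ) := by exact_mod_cast Nat.lt_of_lt_of_le Nat.zero_lt_one hC1
      exact (Real.one_lt_rpow_iff_of_pos (by norm_num)).mpr
        (Or.inl ⟨by norm_num, by positivity⟩)
    linarith
  obtain ⟨k, hk⟩ := hkey
  set K := Subgroup.closure {g : G | ∃ i < k, g = conjSeq x y i} with hK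
  have hall : ∀ m, conjSeq x y m ∈ K := by
    intro m
    induction m using Nat.strong_induction_on with
    | _ m IH =>
      rcases lt_trichotomy m k with h | h | h
      · exact Subgroup.subset_closure ⟨m, h, rfl⟩
      · subst h; exact hk
      · set f := (MulAut.conj (x ^ (m - k))).toMonoidHom with hf
        have hc : ∀ i : ℕ, f (conjSeq x y i) = conjSeq x y (m - k + i) := by
          intro i
          simp only [hf, MulAut.conj, conjSeq, MulEquiv.toMonoidHom_eq_coe,
            MonoidHom.coe_coe, MulEquiv.coe_mk, Equiv.coe_fn_mk, MonoidHom.coe_mk,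
            OneHom.coe_mk, pow_add]
          group
        have hm : conjSeq x y m = f (conjSeq x y k) := by
          rw [hc k, Nat.sub_add_cancel h.le]
        rw [hm]
        have hmem : f (conjSeq x y k) ∈
            Subgroup.map f (Subgroup.closure {g : G | ∃ i < k, g = conjSeq x y i}) :=
          Subgroup.mem_map_of_mem f hk
        rw [MonoidHom.map_closure] at hmem
        refine (Subgroup.closure_le K).mpr ?_ hmem
        rintro z ⟨w, ⟨i, hi, rfl⟩, rfl⟩
        rw [hc i]
        exact IH (m - k + i) (by omega)
  have hEq : Subgroup.closure {g : G | ∃ n : ℕ, g = x ^ n * y * (x ^ n)⁻¹} = K := by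
    apply le_antisymm
    · rw [Subgroup.closure_le]
      rintro g ⟨n, rfl⟩
      exact hall n
    · apply (Subgroup.closure_le _).mpr
      rintro g ⟨i, _, rfl⟩
      exact Subgroup.subset_closure ⟨i, rfl⟩
  rw [hEq, hK, Subgroup.fg_iff]
  refine ⟨{g : G | ∃ i < k, g = conjSeq x y i}, rfl, ?_⟩
  have : {g : G | ∃ i < k, g = conjSeq x y i} = (fun i => conjSeq x y i) '' Set.Iio k := by
    ext g; simp [Set.mem_image, eq_comm]
  rw [this]
  exact (Set.finite_Iio k).image _
end
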